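/- arXiv:1712.01647 — 5 statements merged into one kernel-verified Lean document; each statement's English description precedes it below -/
import Mathlib

section
/- Let A be a real square matrix that is a weakly diagonally dominant Z-matrix with nonnegative diagonal entries. Then the following are equivalent: (i) A is a nonsingular M-matrix, i.e., A is nonsingular and every entry of A⁻¹ is nonnegative; (ii) A is nonsingular; (iii) A is weakly chained diagonally dominant. -/
open Finset

/-- Row `i` of `A` is strictly diagonally dominant (SDD). -/
def SDDRow {n : ℕ} (A : Matrix (Fin n) (Fin n) ℝ) (i : Fin n) : Prop :=
  ∑ j ∈ Finset.univ.erase i, |A i j| < |A i i|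

/-- `A` is weakly diagonally dominant (WDD): every row is WDD. -/
def WDD {n : ℕ} (A : Matrix (Fin n) (Fin n) ℝ) : Prop :=
  ∀ i, ∑ j ∈ Finset.univ.erase i, |A i j| ≤ |A i i|

/-- `A` is a Z-matrix: nonpositive off-diagonal entries. -/
def ZMat {n : ℕ} (A : Matrix (Fin n) (Fin n) ℝ) : Prop :=
  ∀ i j, i ≠ j → A i j ≤ 0

/-- `A` is weakly chained diagonally dominant (WCDD): `A` is WDD and from every row that is
not SDD there is a walk in the adjacency graph of `A` (an edge from `k` to `l` whenever
`A k l ≠ 0`) to some SDD row. -/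
def WCDD {n : ℕ} (A : Matrix (Fin n) (Fin n) ℝ) : Prop :=
  WDD A ∧ ∀ i, ¬ SDDRow A i →
    ∃ j, Relation.ReflTransGen (fun k l => A k l ≠ 0) i j ∧ SDDRow A j

/-!
For a Z-matrix with nonnegative diagonal, weak diagonal dominance says that every row sum is
nonnegative, and a row is strictly dominant exactly when its row sum is positive. Writing
`(A x)ᵢ = ∑ⱼ Aᵢⱼ (xⱼ - xᵢ) + xᵢ ∑ⱼ Aᵢⱼ` gives a minimum principle: if `x` has a negative
minimum at `i` and `(A x)ᵢ ≥ 0`, then row `i` has row sum zero and `x` takes the same value at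
every neighbour of `i`. Following a walk to a strictly dominant row shows that a WCDD matrix is
monotone (`A x ≥ 0 → x ≥ 0`), hence nonsingular with nonnegative inverse. Conversely, if some
row cannot reach a strictly dominant row, the rows reachable from it form a block with zero row
sums that is closed under the adjacency graph, so `A` is block triangular with a singular block.
-/

open Matrix

namespace Matrix

variable {ι K : Type*} [Fintype ι] [DecidableEq ι]

theorem det_eq_zero_of_forall_sum_row_eq_zero [CommRing K] [IsDomain K] [Nonempty ι]
    {M : Matrix ι ι K} (h : ∀ i, ∑ j, M i j = 0) : M.det = 0 := by
  refine exists_mulVec_eq_zero_iff.mp ⟨fun _ => 1, Function.ne_iff.mpr ⟨Classical.arbitrary ι,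
    one_ne_zero⟩, funext fun i => ?_⟩
  simpa [mulVec, dotProduct] using h i

theorem inv_apply_nonneg_of_monotone [Field K] [LinearOrder K] [IsStrictOrderedRing K]
    {M : Matrix ι ι K} (hM : IsUnit M.det) (hmono : ∀ x, 0 ≤ M *ᵥ x → 0 ≤ x) (i j : ι) :
    0 ≤ M⁻¹ i j := by
  have hcol : M *ᵥ M⁻¹.col j = Pi.single j 1 := by
    rw [← mulVec_single_one, mulVec_mulVec, mul_nonsing_inv M hM, one_mulVec]
  exact hmono _ (hcol ▸ Pi.single_nonneg.mpr zero_le_one) i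

end Matrix

namespace ZMat

variable {n : ℕ} {A : Matrix (Fin n) (Fin n) ℝ}

theorem sum_erase_abs_eq (hZ : ZMat A) (i : Fin n) :
    ∑ j ∈ univ.erase i, |A i j| = A i i - ∑ j, A i j := by
  rw [← add_sum_erase _ _ (mem_univ i), sub_add_cancel_left, ← sum_neg_distrib]
  exact sum_congr rfl fun j hj => abs_of_nonpos (hZ i j (ne_of_mem_erase hj).symm)

theorem sddRow_iff (hZ : ZMat A) {i : Fin n} (hdiag : 0 ≤ A i i) :
    SDDRow A i ↔ 0 < ∑ j, A i j := by
  rw [SDDRow, hZ.sum_erase_abs_eq, abs_of_nonneg hdiag, sub_lt_self_iff]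

theorem sum_row_nonneg (hZ : ZMat A) (hW : WDD A) (hdiag : ∀ i, 0 ≤ A i i) (i : Fin n) :
    0 ≤ ∑ j, A i j := by
  have := hW i
  rwa [hZ.sum_erase_abs_eq, abs_of_nonneg (hdiag i), sub_le_self_iff] at this

theorem mulVec_apply_eq (x : Fin n → ℝ) (i : Fin n) :
    (A *ᵥ x) i = ∑ j, A i j * (x j - x i) + x i * ∑ j, A i j := by
  simp only [mulVec, dotProduct, mul_sub, sum_sub_distrib, ← sum_mul]
  ring

theorem sum_row_eq_zero_and_eq_of_isMin (hZ : ZMat A) {x : Fin n → ℝ} {i : Fin n}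
    (hrow : 0 ≤ ∑ j, A i j) (hmin : ∀ j, x i ≤ x j) (hneg : x i < 0) (hx : 0 ≤ (A *ᵥ x) i) :
    ∑ j, A i j = 0 ∧ ∀ j, A i j ≠ 0 → x j = x i := by
  have hterm : ∀ j, A i j * (x j - x i) ≤ 0 := fun j => by
    rcases eq_or_ne i j with rfl | hij
    · simp
    · exact mul_nonpos_of_nonpos_of_nonneg (hZ i j hij) (sub_nonneg.mpr (hmin j))
  have hsum : ∑ j, A i j * (x j - x i) ≤ 0 := sum_nonpos fun j _ => hterm j
  have hdiag_part : x i * ∑ j, A i j ≤ 0 := mul_nonpos_of_nonpos_of_nonneg hneg.le hrow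
  rw [mulVec_apply_eq] at hx
  have hzero : ∀ j, A i j * (x j - x i) = 0 :=
    fun j => (sum_eq_zero_iff_of_nonpos fun j _ => hterm j).mp (by linarith) j (mem_univ j)
  refine ⟨(mul_eq_zero.mp (by linarith : x i * ∑ j, A i j = 0)).resolve_left hneg.ne, ?_⟩
  intro j hAij
  exact sub_eq_zero.mp ((mul_eq_zero.mp (hzero j)).resolve_left hAij)

end ZMat

namespace WCDD

variable {n : ℕ} {A : Matrix (Fin n) (Fin n) ℝ}

theorem nonneg_of_mulVec_nonneg (hC : WCDD A) (hZ : ZMat A) (hdiag : ∀ i, 0 ≤ A i i)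
    {x : Fin n → ℝ} (hx : 0 ≤ A *ᵥ x) : 0 ≤ x := by
  intro k
  by_contra! hk
  obtain ⟨i, -, hmin⟩ := exists_min_image univ x ⟨k, mem_univ k⟩
  have hmin : ∀ j, x i ≤ x j := fun j => hmin j (mem_univ j)
  have hprinciple : ∀ j, x j = x i → ∑ l, A j l = 0 ∧ ∀ l, A j l ≠ 0 → x l = x j :=
    fun j hj => hZ.sum_row_eq_zero_and_eq_of_isMin (hZ.sum_row_nonneg hC.1 hdiag j)
      (hj ▸ hmin) (hj ▸ (hmin k).trans_lt hk) (hx j)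
  have hnot_sdd : ∀ j, x j = x i → ¬ SDDRow A j := fun j hj hsdd =>
    ((hZ.sddRow_iff (hdiag j)).mp hsdd).ne' (hprinciple j hj).1
  have hconst : ∀ j, Relation.ReflTransGen (fun k l => A k l ≠ 0) i j → x j = x i := by
    intro j hwalk
    induction hwalk with
    | refl => rfl
    | tail _ hedge ih => exact ((hprinciple _ ih).2 _ hedge).trans ih
  obtain ⟨j, hwalk, hsdd⟩ := hC.2 i (hnot_sdd i rfl)
  exact hnot_sdd j (hconst j hwalk) hsdd

theorem det_ne_zero (hC : WCDD A) (hZ : ZMat A) (hdiag : ∀ i, 0 ≤ A i i) : A.det ≠ 0 := by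
  intro hdet
  obtain ⟨v, hv, hAv⟩ := exists_mulVec_eq_zero_iff.mpr hdet
  have hpos : 0 ≤ v := hC.nonneg_of_mulVec_nonneg hZ hdiag hAv.ge
  have hneg : 0 ≤ -v := hC.nonneg_of_mulVec_nonneg hZ hdiag (by rw [mulVec_neg, hAv, neg_zero])
  exact hv (le_antisymm (neg_nonneg.mp hneg) hpos)

end WCDD

theorem det_eq_zero_of_not_wcdd {n : ℕ} {A : Matrix (Fin n) (Fin n) ℝ} (hZ : ZMat A)
    (hW : WDD A) (hdiag : ∀ i, 0 ≤ A i i) (h : ¬ WCDD A) : A.det = 0 := by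
  classical
  obtain ⟨i, -, hno⟩ : ∃ i, ¬ SDDRow A i ∧
      ∀ j, Relation.ReflTransGen (fun k l => A k l ≠ 0) i j → ¬ SDDRow A j := by
    simpa [WCDD, hW] using h
  set reach : Fin n → Prop := Relation.ReflTransGen (fun k l => A k l ≠ 0) i
  have hclosed : ∀ j, reach j → ∀ k, ¬ reach k → A j k = 0 :=
    fun j hj k hk => not_not.mp fun hjk => hk (hj.tail hjk)
  have hrow : ∀ j, reach j → ∑ k, A j k = 0 := fun j hj =>
    le_antisymm (not_lt.mp ((hZ.sddRow_iff (hdiag j)).not.mp (hno j hj)))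
      (hZ.sum_row_nonneg hW hdiag j)
  have : Nonempty {j // reach j} := ⟨⟨i, .refl⟩⟩
  have hblock : (toSquareBlockProp A reach).det = 0 := by
    refine det_eq_zero_of_forall_sum_row_eq_zero fun j => ?_
    have hsplit := Fintype.sum_subtype_add_sum_subtype reach (A j)
    rw [Fintype.sum_eq_zero (fun k : {k // ¬ reach k} => A j k) fun k => hclosed j j.2 k.1 k.2,
      add_zero, hrow j j.2] at hsplit
    exact hsplit
  rw [twoBlockTriangular_det' A reach hclosed, hblock, zero_mul]

/-- For a WDD Z-matrix with nonnegative diagonal entries, the following are equivalent: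
(i) `A` is a nonsingular M-matrix (nonsingular with entrywise nonnegative inverse);
(ii) `A` is nonsingular; (iii) `A` is WCDD. -/
theorem wdd_z_matrix_M_iff_nonsingular_iff_wcdd {n : ℕ} (A : Matrix (Fin n) (Fin n) ℝ)
    (hZ : ZMat A) (hW : WDD A) (hdiag : ∀ i, 0 ≤ A i i) :
    ((IsUnit A.det ∧ ∀ i j, 0 ≤ A⁻¹ i j) ↔ IsUnit A.det) ∧
      (IsUnit A.det ↔ WCDD A) := by
  have hwcdd : IsUnit A.det ↔ WCDD A :=
    ⟨fun h => by_contra fun hC => h.ne_zero (det_eq_zero_of_not_wcdd hZ hW hdiag hC),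
      fun hC => (hC.det_ne_zero hZ hdiag).isUnit⟩
  refine ⟨⟨And.left, fun h => ⟨h, ?_⟩⟩, hwcdd⟩
  exact inv_apply_nonneg_of_monotone h fun _ => (hwcdd.mp h).nonneg_of_mulVec_nonneg hZ hdiag
end

section
/- Assume (H1), (H2), and that A(P) is monotone for every P ∈ 𝒫. Then the ε-policy-iteration sequence (Uℓ)_{ℓ≥1} is well defined (each A(Pℓ) is nonsingular) and converges to a vector U ∈ ℝⁿ which is a solution of the Bellman problem sup_{P∈𝒫}{−A(P)U + y(P)} = 0; moreover this solution is unique. -/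
open Filter Topology

/-- Row-decoupled data: the `i`-th row of `A P` and the `i`-th entry of `y P` depend only
on the `i`-th coordinate of the control `P`. -/
def RowDecoupled {n : ℕ} {P : Fin n → Type*}
    (A : (∀ i, P i) → Matrix (Fin n) (Fin n) ℝ)
    (y : (∀ i, P i) → (Fin n → ℝ)) : Prop :=
  ∀ p q : ∀ i, P i, ∀ i, p i = q i →
    (∀ j, A p i j = A q i j) ∧ y p i = y q i

/-- `U` solves the Bellman problem `sup_{P∈𝒫} {−A(P)U + y(P)} = 0`: for every row `i`,
`0` is the least upper bound of `{[−A(P)U + y(P)]ᵢ : P ∈ 𝒫}`. -/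
def IsBellmanSol {n : ℕ} {P : Fin n → Type*}
    (A : (∀ i, P i) → Matrix (Fin n) (Fin n) ℝ)
    (y : (∀ i, P i) → (Fin n → ℝ)) (U : Fin n → ℝ) : Prop :=
  ∀ i, IsLUB (Set.range fun p => y p i - (A p).mulVec U i) 0

/-- A real square matrix is monotone if it is nonsingular with entrywise nonnegative
inverse. -/
def MatMono {n : ℕ} (M : Matrix (Fin n) (Fin n) ℝ) : Prop :=
  IsUnit M.det ∧ ∀ i j, 0 ≤ M⁻¹ i j

/-- (H1): `P ↦ A(P)⁻¹` is bounded on the set of controls with nonsingular matrix. -/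
def H1 {n : ℕ} {P : Fin n → Type*}
    (A : (∀ i, P i) → Matrix (Fin n) (Fin n) ℝ) : Prop :=
  ∃ C, ∀ p, IsUnit (A p).det → ∀ i j, |(A p)⁻¹ i j| ≤ C

/-- (H2): `A` and `y` are bounded. -/
def H2 {n : ℕ} {P : Fin n → Type*}
    (A : (∀ i, P i) → Matrix (Fin n) (Fin n) ℝ)
    (y : (∀ i, P i) → (Fin n → ℝ)) : Prop :=
  ∃ C, ∀ p, (∀ i j, |A p i j| ≤ C) ∧ ∀ i, |y p i| ≤ C

/-!
Since the matrices `A(P)` are monotone with uniformly bounded inverses, an entrywise lower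
bound `A(P) w ≥ -δ 𝟙` forces `w ≥ -n C δ 𝟙`. Applied to consecutive iterates, the
`εℓ₊₁`-optimality of `Pℓ₊₁` against the competitor `Pℓ` (for which `A(Pℓ)Uℓ = y(Pℓ)`) gives
`Uℓ₊₁ ≥ Uℓ - n C εℓ₊₁ 𝟙`, so each
coordinate of the bounded sequence `Uℓ` is increasing up to a summable error and hence
converges. Passing to the limit in the `ε`-optimality shows that the limit solves the
Bellman problem. For uniqueness, row-decoupling lets one glue row-wise `δ`-maximizers for a
solution `V` into a single control `P`, and then `A(P)(W - V) ≥ -δ 𝟙` for every other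
solution `W`; hence `V ≤ W + n C δ 𝟙` for all `δ > 0`.
-/

open Matrix

theorem exists_tendsto_of_bddAbove_of_le_succ_add {u c : ℕ → ℝ}
    (hu : BddAbove (Set.range u)) (hc : Summable c) (hstep : ∀ m, u m ≤ u (m + 1) + c m) :
    ∃ L, Tendsto u atTop (𝓝 L) := by
  set S : ℕ → ℝ := fun m => ∑ k ∈ Finset.range m, c k
  have hS : Tendsto S atTop (𝓝 (∑' k, c k)) := hc.hasSum.tendsto_sum_nat
  have hmono : Monotone (u + S) := monotone_nat_of_le_succ fun m => by
    simp only [Pi.add_apply, S, Finset.sum_range_succ]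
    linarith [hstep m]
  have hbdd : BddAbove (Set.range (u + S)) := by
    obtain ⟨a, ha⟩ := hu
    obtain ⟨b, hb⟩ := hS.bddAbove_range
    exact ⟨a + b, by rintro _ ⟨m, rfl⟩; exact add_le_add (ha ⟨m, rfl⟩) (hb ⟨m, rfl⟩)⟩
  exact ⟨_, by simpa using (tendsto_atTop_ciSup hmono hbdd).sub hS⟩

theorem abs_mulVec_apply_le {n : ℕ} {M : Matrix (Fin n) (Fin n) ℝ} {v : Fin n → ℝ} {C D : ℝ}
    {i : Fin n} (hM : ∀ j, |M i j| ≤ C) (hv : ∀ j, |v j| ≤ D) :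
    |(M *ᵥ v) i| ≤ n * (C * D) :=
  calc |(M *ᵥ v) i| = |∑ j, M i j * v j| := rfl
    _ ≤ ∑ j, |M i j * v j| := Finset.abs_sum_le_sum_abs _ _
    _ ≤ ∑ _j : Fin n, C * D := Finset.sum_le_sum fun j _ => by
        rw [abs_mul]
        exact mul_le_mul (hM j) (hv j) (abs_nonneg _) ((abs_nonneg _).trans (hM j))
    _ = n * (C * D) := by simp

theorem tendsto_mulVec_zero_of_abs_le {α : Type*} {l : Filter α} {n : ℕ}
    {M : α → Matrix (Fin n) (Fin n) ℝ} {v : α → Fin n → ℝ} {C : ℝ}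
    (hM : ∀ a i j, |M a i j| ≤ C) (hv : Tendsto v l (𝓝 0)) :
    Tendsto (fun a => M a *ᵥ v a) l (𝓝 0) := by
  have hnorm : Tendsto (fun a => n * (C * ‖v a‖)) l (𝓝 0) := by
    simpa using ((tendsto_zero_iff_norm_tendsto_zero.1 hv).const_mul C).const_mul (n : ℝ)
  refine tendsto_pi_nhds.2 fun i => squeeze_zero_norm (fun a => ?_) hnorm
  exact abs_mulVec_apply_le (hM a i) (norm_le_pi_norm (v a))

theorem MatMono.neg_le_of_neg_le_mulVec {n : ℕ} {M : Matrix (Fin n) (Fin n) ℝ} {w : Fin n → ℝ}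
    {C δ : ℝ} (hM : MatMono M) (hC : ∀ i j, M⁻¹ i j ≤ C) (hδ : 0 ≤ δ)
    (hw : ∀ i, -δ ≤ (M *ᵥ w) i) (i : Fin n) : -(n * C * δ) ≤ w i :=
  calc -(n * C * δ) = ∑ _j : Fin n, C * -δ := by
        rw [Finset.sum_const, Finset.card_univ, Fintype.card_fin, nsmul_eq_mul]; ring
    _ ≤ ∑ j, M⁻¹ i j * (M *ᵥ w) j := Finset.sum_le_sum fun j _ =>
        (mul_le_mul_of_nonpos_right (hC i j) (neg_nonpos.2 hδ)).trans
          (mul_le_mul_of_nonneg_left (hw j) (hM.2 i j))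
    _ = w i := by
        show (M⁻¹ *ᵥ (M *ᵥ w)) i = w i
        rw [mulVec_mulVec, nonsing_inv_mul _ hM.1, one_mulVec]

section Bellman

variable {n : ℕ} {P : Fin n → Type*} {A : (∀ i, P i) → Matrix (Fin n) (Fin n) ℝ}
  {y : (∀ i, P i) → Fin n → ℝ}

theorem RowDecoupled.exists_glued (hrd : RowDecoupled A y) (ps : Fin n → ∀ i, P i) :
    ∃ p, ∀ j v, y p j - (A p *ᵥ v) j = y (ps j) j - (A (ps j) *ᵥ v) j := by
  refine ⟨fun k => ps k k, fun j v => ?_⟩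
  obtain ⟨hA, hy⟩ := hrd (fun k => ps k k) (ps j) j rfl
  simp only [hy, mulVec, dotProduct, hA]

theorem isBellmanSol_of_le_of_tendsto {V : Fin n → ℝ}
    (hle : ∀ p i, y p i - (A p *ᵥ V) i ≤ 0) (q : ℕ → ∀ i, P i)
    (hq : ∀ i, Tendsto (fun ℓ => y (q ℓ) i - (A (q ℓ) *ᵥ V) i) atTop (𝓝 0)) :
    IsBellmanSol A y V := fun i =>
  isLUB_of_mem_closure (by rintro _ ⟨p, rfl⟩; exact hle p i)
    (mem_closure_of_tendsto (hq i) (Eventually.of_forall fun ℓ => ⟨q ℓ, rfl⟩))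

theorem IsBellmanSol.le (hrd : RowDecoupled A y) (h1 : H1 A) (hmono : ∀ p, MatMono (A p))
    {V W : Fin n → ℝ} (hV : IsBellmanSol A y V) (hW : IsBellmanSol A y W) : V ≤ W := by
  obtain ⟨C, hC⟩ := h1
  intro i
  have hgap : ∀ δ > 0, V i - W i ≤ n * C * δ := by
    intro δ hδ
    have hnear : ∀ j, ∃ p, -δ < y p j - (A p *ᵥ V) j := fun j => by
      obtain ⟨_, ⟨p, rfl⟩, hp, -⟩ := (hV j).exists_between (neg_lt_zero.2 hδ)
      exact ⟨p, hp⟩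
    choose ps hps using hnear
    obtain ⟨p, hp⟩ := hrd.exists_glued ps
    have hlow : ∀ j, -δ ≤ (A p *ᵥ (W - V)) j := fun j => by
      rw [mulVec_sub, Pi.sub_apply]
      linarith [hp j V, hps j, (hW j).1 ⟨p, rfl⟩]
    have hWV := (hmono p).neg_le_of_neg_le_mulVec
      (fun i j => le_of_abs_le (hC p (hmono p).1 i j)) hδ.le hlow i
    rw [Pi.sub_apply] at hWV
    linarith
  have hlim : Tendsto (fun δ => (n : ℝ) * C * δ) (𝓝[>] 0) (𝓝 0) := by
    simpa using
      tendsto_nhdsWithin_of_tendsto_nhds ((continuous_const_mul ((n : ℝ) * C)).tendsto 0)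
  exact sub_nonpos.1 (ge_of_tendsto hlim (eventually_nhdsWithin_of_forall hgap))

theorem IsBellmanSol.unique (hrd : RowDecoupled A y) (h1 : H1 A) (hmono : ∀ p, MatMono (A p))
    {V W : Fin n → ℝ} (hV : IsBellmanSol A y V) (hW : IsBellmanSol A y W) : V = W :=
  le_antisymm (hV.le hrd h1 hmono hW) (hW.le hrd h1 hmono hV)

end Bellman

/-- `Pc ℓ` is the control `Pℓ₊₁` of the paper: it is `ε ℓ`-optimal for `U ℓ`. -/
structure IsEpsPolicyIteration {n : ℕ} {P : Fin n → Type*}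
    (A : (∀ i, P i) → Matrix (Fin n) (Fin n) ℝ) (y : (∀ i, P i) → Fin n → ℝ)
    (ε : ℕ → ℝ) (U : ℕ → Fin n → ℝ) (Pc : ℕ → ∀ i, P i) : Prop where
  approx : ∀ ℓ i p, y p i - (A p *ᵥ U ℓ) i ≤ y (Pc ℓ) i - (A (Pc ℓ) *ᵥ U ℓ) i + ε ℓ
  solve : ∀ ℓ, A (Pc ℓ) *ᵥ U (ℓ + 1) = y (Pc ℓ)

namespace IsEpsPolicyIteration

variable {n : ℕ} {P : Fin n → Type*} {A : (∀ i, P i) → Matrix (Fin n) (Fin n) ℝ}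
  {y : (∀ i, P i) → Fin n → ℝ} {ε : ℕ → ℝ} {U : ℕ → Fin n → ℝ} {Pc : ℕ → ∀ i, P i}

theorem sub_mulVec_eq (h : IsEpsPolicyIteration A y ε U Pc) (ℓ : ℕ) (v : Fin n → ℝ) :
    y (Pc ℓ) - A (Pc ℓ) *ᵥ v = A (Pc ℓ) *ᵥ (U (ℓ + 1) - v) := by
  rw [mulVec_sub, h.solve]

/-- `Pc ℓ`, whose residual at `U (ℓ + 1)` vanishes, competes in the optimality of `Pc (ℓ + 1)`. -/
theorem neg_le_mulVec_succ_sub (h : IsEpsPolicyIteration A y ε U Pc) (ℓ : ℕ) (i : Fin n) :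
    -ε (ℓ + 1) ≤ (A (Pc (ℓ + 1)) *ᵥ (U (ℓ + 2) - U (ℓ + 1))) i := by
  rw [← h.sub_mulVec_eq, Pi.sub_apply]
  linarith [h.approx (ℓ + 1) i (Pc ℓ), congrFun (h.solve ℓ) i]

theorem exists_tendsto (h : IsEpsPolicyIteration A y ε U Pc) (hmono : ∀ p, MatMono (A p))
    (h1 : H1 A) (h2 : H2 A y) (hε : ∀ ℓ, 0 ≤ ε ℓ) (hsum : Summable ε) :
    ∃ L, Tendsto U atTop (𝓝 L) := by
  obtain ⟨C₁, hC₁⟩ := h1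
  obtain ⟨C₂, hC₂⟩ := h2
  have hcoord : ∀ i, ∃ L, Tendsto (fun ℓ => U (ℓ + 1) i) atTop (𝓝 L) := fun i => by
    refine exists_tendsto_of_bddAbove_of_le_succ_add (c := fun ℓ => n * C₁ * ε (ℓ + 1))
      ⟨n * (C₁ * C₂), ?_⟩ (((summable_nat_add_iff 1).2 hsum).mul_left _) fun ℓ => ?_
    · rintro _ ⟨ℓ, rfl⟩
      have hU : U (ℓ + 1) = (A (Pc ℓ))⁻¹ *ᵥ y (Pc ℓ) := by
        rw [← h.solve, mulVec_mulVec, nonsing_inv_mul _ (hmono _).1, one_mulVec]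
      show U (ℓ + 1) i ≤ _
      rw [hU]
      exact le_of_abs_le (abs_mulVec_apply_le (hC₁ _ (hmono _).1 i) (hC₂ _).2)
    · have hstep := (hmono _).neg_le_of_neg_le_mulVec
        (fun i j => le_of_abs_le (hC₁ _ (hmono _).1 i j)) (hε _) (h.neg_le_mulVec_succ_sub ℓ) i
      rw [Pi.sub_apply] at hstep
      linarith
  choose L hL using hcoord
  exact ⟨L, (tendsto_add_atTop_iff_nat 1).1 (tendsto_pi_nhds.2 hL)⟩

theorem isBellmanSol_of_tendsto (h : IsEpsPolicyIteration A y ε U Pc) {C : ℝ}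
    (hA : ∀ p i j, |A p i j| ≤ C) (hε : Tendsto ε atTop (𝓝 0)) {L : Fin n → ℝ}
    (hL : Tendsto U atTop (𝓝 L)) : IsBellmanSol A y L := by
  have hsucc : Tendsto (fun ℓ => U (ℓ + 1)) atTop (𝓝 L) := hL.comp (tendsto_add_atTop_nat 1)
  have hgap : Tendsto (fun ℓ => y (Pc ℓ) - A (Pc ℓ) *ᵥ U ℓ) atTop (𝓝 0) := by
    simp only [h.sub_mulVec_eq]
    exact tendsto_mulVec_zero_of_abs_le (fun ℓ => hA (Pc ℓ)) (by simpa using hsucc.sub hL)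
  refine isBellmanSol_of_le_of_tendsto (fun p i => ?_) Pc fun i => ?_
  · refine le_of_tendsto_of_tendsto' ?_ (by simpa using ((tendsto_pi_nhds.1 hgap i).add hε))
      (h.approx · i p)
    have hAU := ((continuous_const (y := A p)).matrix_mulVec continuous_id).tendsto L |>.comp hL
    exact tendsto_const_nhds.sub (tendsto_pi_nhds.1 hAU i)
  · have hres := tendsto_mulVec_zero_of_abs_le (fun ℓ => hA (Pc ℓ))
      (by simpa using hsucc.sub_const L)
    simpa [← h.sub_mulVec_eq] using tendsto_pi_nhds.1 hres i

end IsEpsPolicyIteration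

theorem eps_policy_iteration_converges_general
    {n : ℕ} {P : Fin n → Type*}
    (A : (∀ i, P i) → Matrix (Fin n) (Fin n) ℝ) (y : (∀ i, P i) → Fin n → ℝ)
    (hrd : RowDecoupled A y) (h1 : H1 A) (h2 : H2 A y)
    (hmono : ∀ p, MatMono (A p))
    (U : ℕ → Fin n → ℝ) (ε : ℕ → ℝ) (Pc : ℕ → ∀ i, P i)
    (hε : ∀ ℓ, 0 < ε ℓ) (hsum : Summable ε)
    (happrox : ∀ (ℓ : ℕ) (i : Fin n) (p : ∀ i, P i),
      y p i - (A p).mulVec (U ℓ) i ≤ y (Pc ℓ) i - (A (Pc ℓ)).mulVec (U ℓ) i + ε ℓ)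
    (hsolve : ∀ ℓ, (A (Pc ℓ)).mulVec (U (ℓ + 1)) = y (Pc ℓ)) :
    (∀ ℓ, IsUnit (A (Pc ℓ)).det) ∧
      ∃ Ustar : Fin n → ℝ, Tendsto U atTop (𝓝 Ustar) ∧
        IsBellmanSol A y Ustar ∧ ∀ V, IsBellmanSol A y V → V = Ustar := by
  have hPI : IsEpsPolicyIteration A y ε U Pc := ⟨happrox, hsolve⟩
  obtain ⟨L, hL⟩ := hPI.exists_tendsto hmono h1 h2 (fun ℓ => (hε ℓ).le) hsum
  have hL_sol : IsBellmanSol A y L := by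
    obtain ⟨C, hC⟩ := h2
    exact hPI.isBellmanSol_of_tendsto (fun p => (hC p).1) hsum.tendsto_atTop_zero hL
  exact ⟨fun ℓ => (hmono _).1, L, hL, hL_sol, fun V hV => hV.unique hrd h1 hmono hL_sol⟩

/-- Under (H1), (H2) and monotonicity of every `A(P)`, the ε-policy-iteration sequence is
well defined (each `A(Pℓ)` is nonsingular) and converges to the unique solution of the
Bellman problem. Here `U (ℓ+1)` solves `A(Pc ℓ) U(ℓ+1) = y(Pc ℓ)` where the control
`Pc ℓ` is an `ε ℓ`-approximate maximizer for the iterate `U ℓ`, the `ε ℓ` being positive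
and summable. -/
theorem eps_policy_iteration_converges
    {n : ℕ} (hn : 1 ≤ n) {P : Fin n → Type*} [∀ i, Nonempty (P i)]
    (A : (∀ i, P i) → Matrix (Fin n) (Fin n) ℝ) (y : (∀ i, P i) → Fin n → ℝ)
    (hrd : RowDecoupled A y) (h1 : H1 A) (h2 : H2 A y)
    (hmono : ∀ p, MatMono (A p))
    (U : ℕ → Fin n → ℝ) (ε : ℕ → ℝ) (Pc : ℕ → ∀ i, P i)
    (hε : ∀ ℓ, 0 < ε ℓ) (hsum : Summable ε)
    (happrox : ∀ (ℓ : ℕ) (i : Fin n) (p : ∀ i, P i),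
      y p i - (A p).mulVec (U ℓ) i ≤ y (Pc ℓ) i - (A (Pc ℓ)).mulVec (U ℓ) i + ε ℓ)
    (hsolve : ∀ ℓ, (A (Pc ℓ)).mulVec (U (ℓ + 1)) = y (Pc ℓ)) :
    (∀ ℓ, IsUnit (A (Pc ℓ)).det) ∧
      ∃ Ustar : Fin n → ℝ, Tendsto U atTop (𝓝 Ustar) ∧
        IsBellmanSol A y Ustar ∧ ∀ V, IsBellmanSol A y V → V = Ustar :=
  eps_policy_iteration_converges_general A y hrd h1 h2 hmono U ε Pc hε hsum happrox hsolve
end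

section
/- Assume (H1). Let U ∈ ℝⁿ be a solution of the Bellman problem sup_{P∈𝒫}{−A(P)U + y(P)} = 0 and let Û ∈ ℝⁿ be any vector. Suppose there exists a sequence (Pℓ)_{ℓ≥1} in 𝒫 such that A(Pℓ) is monotone for each ℓ and −A(Pℓ)Û + y(Pℓ) → 0 entrywise as ℓ → ∞. Then U ≥ Û entrywise. -/
/-! Every control `p` satisfies `y p ≤ A p U`, so `A(Pℓ)(U - Û) ≥ εℓ := y(Pℓ) - A(Pℓ)Û`.
Since `A(Pℓ)⁻¹` is nonnegative this gives `U - Û ≥ A(Pℓ)⁻¹ εℓ`, and the right-hand side tends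
to `0` because the inverses are uniformly bounded by (H1) while `εℓ → 0`. -/

open Filter Topology

open scoped Matrix

namespace Matrix

variable {ι : Type*} [Fintype ι]

theorem mulVec_mono_of_nonneg {M : Matrix ι ι ℝ} (hM : ∀ i j, 0 ≤ M i j) {u v : ι → ℝ}
    (huv : u ≤ v) : M *ᵥ u ≤ M *ᵥ v := fun i =>
  Finset.sum_le_sum fun j _ => mul_le_mul_of_nonneg_left (huv j) (hM i j)

theorem inv_mulVec_le_of_le_mulVec [DecidableEq ι] {M : Matrix ι ι ℝ} (hdet : IsUnit M.det)
    (hinv : ∀ i j, 0 ≤ M⁻¹ i j) {u w : ι → ℝ} (h : w ≤ M *ᵥ u) : M⁻¹ *ᵥ w ≤ u :=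
  calc M⁻¹ *ᵥ w ≤ M⁻¹ *ᵥ (M *ᵥ u) := mulVec_mono_of_nonneg hinv h
    _ = u := by rw [mulVec_mulVec, nonsing_inv_mul _ hdet, one_mulVec]

theorem tendsto_mulVec_apply_zero {α : Type*} {l : Filter α} {M : α → Matrix ι ι ℝ}
    {v : α → ι → ℝ} {C : ℝ} (hM : ∀ a i j, |M a i j| ≤ C)
    (hv : ∀ j, Tendsto (fun a => v a j) l (𝓝 0)) (i : ι) :
    Tendsto (fun a => (M a *ᵥ v a) i) l (𝓝 0) := by
  simpa [mulVec, dotProduct] using tendsto_finsetSum Finset.univ fun j _ =>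
    bdd_le_mul_tendsto_zero' C (.of_forall fun a => hM a i j) (hv j)

end Matrix

section Bellman

variable {n : ℕ} {P : Fin n → Type*} {A : (∀ i, P i) → Matrix (Fin n) (Fin n) ℝ}
  {y : (∀ i, P i) → Fin n → ℝ} {U : Fin n → ℝ}

theorem IsBellmanSol.le_mulVec (hU : IsBellmanSol A y U) (p : ∀ i, P i) : y p ≤ A p *ᵥ U :=
  fun i => sub_nonpos.mp ((hU i).1 ⟨p, rfl⟩)

theorem IsBellmanSol.sub_mulVec_le_mulVec_sub (hU : IsBellmanSol A y U) (p : ∀ i, P i)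
    (V : Fin n → ℝ) : y p - A p *ᵥ V ≤ A p *ᵥ (U - V) := by
  rw [Matrix.mulVec_sub]
  exact sub_le_sub_right (hU.le_mulVec p) _

end Bellman

theorem bellman_one_side_general
    {n : ℕ} {P : Fin n → Type*}
    (A : (∀ i, P i) → Matrix (Fin n) (Fin n) ℝ) (y : (∀ i, P i) → Fin n → ℝ)
    (h1 : H1 A)
    (U : Fin n → ℝ) (hU : IsBellmanSol A y U) (Uhat : Fin n → ℝ)
    (Pc : ℕ → ∀ i, P i) (hmono : ∀ ℓ, MatMono (A (Pc ℓ)))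
    (hconv : ∀ i, Tendsto (fun ℓ => y (Pc ℓ) i - (A (Pc ℓ)).mulVec Uhat i) atTop (𝓝 0)) :
    ∀ i, Uhat i ≤ U i := by
  obtain ⟨C, hC⟩ := h1
  intro i
  set ε : ℕ → Fin n → ℝ := fun ℓ => y (Pc ℓ) - A (Pc ℓ) *ᵥ Uhat
  have hgap : ∀ ℓ, ((A (Pc ℓ))⁻¹ *ᵥ ε ℓ) i ≤ U i - Uhat i := fun ℓ =>
    Matrix.inv_mulVec_le_of_le_mulVec (hmono ℓ).1 (hmono ℓ).2
      (hU.sub_mulVec_le_mulVec_sub (Pc ℓ) Uhat) i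
  have hlim : Tendsto (fun ℓ => ((A (Pc ℓ))⁻¹ *ᵥ ε ℓ) i) atTop (𝓝 0) :=
    Matrix.tendsto_mulVec_apply_zero (fun ℓ => hC (Pc ℓ) (hmono ℓ).1) hconv i
  linarith [le_of_tendsto' hlim hgap]

/-- Under (H1): if `U` solves the Bellman problem, `Û` is any vector, and there is a
sequence of controls `Pℓ` with `A(Pℓ)` monotone and `−A(Pℓ)Û + y(Pℓ) → 0` entrywise,
then `U ≥ Û` entrywise. -/
theorem bellman_one_side
    {n : ℕ} (hn : 1 ≤ n) {P : Fin n → Type*} [∀ i, Nonempty (P i)]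
    (A : (∀ i, P i) → Matrix (Fin n) (Fin n) ℝ) (y : (∀ i, P i) → Fin n → ℝ)
    (hrd : RowDecoupled A y) (h1 : H1 A)
    (U : Fin n → ℝ) (hU : IsBellmanSol A y U) (Uhat : Fin n → ℝ)
    (Pc : ℕ → ∀ i, P i) (hmono : ∀ ℓ, MatMono (A (Pc ℓ)))
    (hconv : ∀ i, Tendsto (fun ℓ => y (Pc ℓ) i - (A (Pc ℓ)).mulVec Uhat i) atTop (𝓝 0)) :
    ∀ i, Uhat i ≤ U i :=
  bellman_one_side_general A y h1 U hU Uhat Pc hmono hconv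
end

section
/- Let M ≥ 0 be an integer, let x_0, …, x_M ∈ ℝ be arbitrary grid points, and let κ ≥ 0, c > 0, β ≥ 0, and τ ∈ ℝ. For U ∈ ℝ^{M+1} define the discretized intervention operator (𝓜U)ᵢ = max_{0≤j≤M} { U_j − e^{−βτ}( κ|x_j − x_i| + c ) }. Then for every U ∈ ℝ^{M+1} and every 0 ≤ i ≤ M, (𝓜(𝓜U))ᵢ ≤ (𝓜U)ᵢ − e^{−βτ}·c; in particular (𝓜²U)ᵢ < (𝓜U)ᵢ, so two consecutive applications of the intervention operator are strictly suboptimal. -/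
/-! The proportional part of the cost satisfies the triangle inequality, so `𝓜U` is
`e^{−βτ}κ`-Lipschitz in the grid point: moving first from `i` to `j` and then optimally from `j`
gains at most what moving optimally from `i` directly gains, while paying the fixed cost twice. -/

/-- Discretized intervention operator for the FEX rate problem:
`(𝓜U)ᵢ = max_j { U_j − e^{−βτ}(κ|x_j − x_i| + c) }`. -/
noncomputable def Mo (M : ℕ) (x : Fin (M + 1) → ℝ) (κ c β τ : ℝ)
    (U : Fin (M + 1) → ℝ) (i : Fin (M + 1)) : ℝ :=
  ⨆ j, (U j - Real.exp (-(β * τ)) * (κ * |x j - x i| + c))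

open Real

section Intervention

variable {ι α : Type*} [Finite ι] [PseudoMetricSpace α]

noncomputable def intervention (a b : ℝ) (x : ι → α) (U : ι → ℝ) (i : ι) : ℝ :=
  ⨆ j, U j - (a * dist (x j) (x i) + b)

lemma sub_cost_le_intervention (a b : ℝ) (x : ι → α) (U : ι → ℝ) (i j : ι) :
    U j - (a * dist (x j) (x i) + b) ≤ intervention a b x U i :=
  le_ciSup (f := fun j => U j - (a * dist (x j) (x i) + b)) (Set.finite_range _).bddAbove j

variable [Nonempty ι] {a : ℝ}

lemma intervention_le_intervention_add (ha : 0 ≤ a) (b : ℝ) (x : ι → α) (U : ι → ℝ)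
    (i j : ι) : intervention a b x U j ≤ intervention a b x U i + a * dist (x j) (x i) :=
  ciSup_le fun k => by
    have hk := sub_cost_le_intervention a b x U i k
    have htri : a * dist (x k) (x i) ≤ a * dist (x k) (x j) + a * dist (x j) (x i) := by
      rw [← mul_add]
      exact mul_le_mul_of_nonneg_left (dist_triangle _ _ _) ha
    linarith

lemma intervention_intervention_le (ha : 0 ≤ a) (b : ℝ) (x : ι → α) (U : ι → ℝ) (i : ι) :
    intervention a b x (intervention a b x U) i ≤ intervention a b x U i - b :=
  ciSup_le fun j => by linarith [intervention_le_intervention_add ha b x U i j]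

end Intervention

lemma Mo_eq_intervention (M : ℕ) (x : Fin (M + 1) → ℝ) (κ c β τ : ℝ) :
    Mo M x κ c β τ = intervention (exp (-(β * τ)) * κ) (exp (-(β * τ)) * c) x := by
  ext U i
  refine congrArg iSup (funext fun j => ?_)
  rw [Real.dist_eq]
  ring

theorem consecutive_impulses_suboptimal_general (M : ℕ) (x : Fin (M + 1) → ℝ)
    (κ c β τ : ℝ) (hκ : 0 ≤ κ) (hc : 0 < c)
    (U : Fin (M + 1) → ℝ) (i : Fin (M + 1)) :
    Mo M x κ c β τ (Mo M x κ c β τ U) i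
        ≤ Mo M x κ c β τ U i - Real.exp (-(β * τ)) * c ∧
      Mo M x κ c β τ (Mo M x κ c β τ U) i < Mo M x κ c β τ U i := by
  have hE : 0 < exp (-(β * τ)) := exp_pos _
  rw [Mo_eq_intervention]
  have hle := intervention_intervention_le (mul_nonneg hE.le hκ) (exp (-(β * τ)) * c) x U i
  exact ⟨hle, hle.trans_lt (sub_lt_self _ (mul_pos hE hc))⟩

/-- Two consecutive applications of the discretized intervention operator are strictly
suboptimal: `(𝓜²U)ᵢ ≤ (𝓜U)ᵢ − e^{−βτ}·c < (𝓜U)ᵢ`. -/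
theorem consecutive_impulses_suboptimal (M : ℕ) (x : Fin (M + 1) → ℝ)
    (κ c β τ : ℝ) (hκ : 0 ≤ κ) (hc : 0 < c) (hβ : 0 ≤ β)
    (U : Fin (M + 1) → ℝ) (i : Fin (M + 1)) :
    Mo M x κ c β τ (Mo M x κ c β τ U) i
        ≤ Mo M x κ c β τ U i - Real.exp (-(β * τ)) * c ∧
      Mo M x κ c β τ (Mo M x κ c β τ U) i < Mo M x κ c β τ U i :=
  consecutive_impulses_suboptimal_general M x κ c β τ hκ hc U i
end

section
/- Let T > 0, let W be a nonempty compact metric space, let a, b : ℝ × W → ℝ be continuous functions satisfying |a(x,w) − a(y,w)| + |b(x,w) − b(y,w)| ≤ L|x − y| for all x, y ∈ ℝ and w ∈ W (L a constant not depending on w), and let f : [0,T] × ℝ × W → ℝ be continuous. Define H(t, x, p, A) = −sup_{w∈W}[ (1/2) b(x,w)² A + a(x,w) p + f(t,x,w) ]. Then there exists a constant C > 0 such that for every compact set D ⊆ ℝ there exists a modulus of continuity ϖ such that for all t, s ∈ [0,T], x, y ∈ D, X, Y ∈ ℝ, α > 0, and ε > 0 satisfying the 2×2 positive-semidefinite matrix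 inequality [[X, 0],[0, −Y]] ≼ 3α·[[1, −1],[−1, 1]], one has H(s, y, α(x−y) − εy, Y − ε) − H(t, x, α(x−y) + εx, X + ε) ≤ C·( α|x−y|² + ε(1 + |x|² + |y|²) ) + ϖ(|(t,x) − (s,y)|). -/
open Filter Topology Set

/-!
For each control `w` the difference of the two integrands splits into a diffusion part, bounded
through the matrix inequality by `3α (b(x,w) - b(y,w))² ≤ 3αL²|x - y|²`; a drift part
`α (a(x,w) - a(y,w)) (x - y) ≤ αL|x - y|²`; the `ε`-terms, controlled by the linear growth of `a`
and `b` that the uniform Lipschitz bound gives on the compact `W`; and `f(t,x,w) - f(s,y,w)`,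
bounded by a modulus of uniform continuity of `f` on the compact `[0,T] × D × W`. Taking the
supremum over `w` passes the bound to `H`.
-/

/-- The non-impulse (HJB) part of the HJBQVI operator:
`H(t,x,p,A) = −sup_{w∈W}[ (1/2) b(x,w)² A + a(x,w) p + f(t,x,w) ]`. -/
noncomputable def Ham {W : Type*} (a b : ℝ → W → ℝ) (f : ℝ → ℝ → W → ℝ)
    (t x p A : ℝ) : ℝ :=
  -(⨆ w, ((1 : ℝ) / 2) * b x w ^ 2 * A + a x w * p + f t x w)

def IsModulusOfContinuity (ϖ : ℝ → ℝ) : Prop :=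
  (∀ r, 0 ≤ ϖ r) ∧ MonotoneOn ϖ (Ici 0) ∧ Tendsto ϖ (𝓝[>] 0) (𝓝 0)

/-- `ϖ r` is the largest oscillation of `g` between points of `K` at distance at most `r`. -/
theorem IsCompact.exists_modulusOfContinuity {α : Type*} [PseudoMetricSpace α] {K : Set α}
    {g : α → ℝ} (hK : IsCompact K) (hg : ContinuousOn g K) :
    ∃ ϖ : ℝ → ℝ, IsModulusOfContinuity ϖ ∧
      ∀ r, ∀ p ∈ K, ∀ q ∈ K, dist p q ≤ r → |g p - g q| ≤ ϖ r := by
  set S : ℝ → Set ℝ := fun r =>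
    (fun pq : α × α => |g pq.1 - g pq.2|) '' {pq | pq ∈ K ×ˢ K ∧ dist pq.1 pq.2 ≤ r}
  have hS_nonneg : ∀ r, ∀ u ∈ S r, 0 ≤ u := by
    rintro r _ ⟨pq, -, rfl⟩
    exact abs_nonneg _
  have hS_bdd : ∀ r, BddAbove (S r) := fun r =>
    ((hK.prod hK).image_of_continuousOn ((hg.comp continuousOn_fst fun _ h => h.1).sub
      (hg.comp continuousOn_snd fun _ h => h.2)).abs).bddAbove.mono
      (image_mono fun _ hpq => hpq.1)
  have hS_mono : Monotone S := fun r₁ r₂ h =>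
    image_mono fun _ ⟨hpq, hr⟩ => ⟨hpq, hr.trans h⟩
  have hϖ_mono : Monotone fun r => sSup (S r) := by
    intro r₁ r₂ h
    show sSup (S r₁) ≤ sSup (S r₂)
    rcases (S r₁).eq_empty_or_nonempty with h₁ | h₁
    · rw [h₁, Real.sSup_empty]
      exact Real.sSup_nonneg (hS_nonneg r₂)
    · exact csSup_le_csSup (hS_bdd r₂) h₁ (hS_mono h)
  have hϖ_small : ∀ δ > 0, ∀ᶠ r in 𝓝[>] (0 : ℝ), sSup (S r) < δ := by
    intro δ hδ
    obtain ⟨η, hη, hclose⟩ :=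
      Metric.uniformContinuousOn_iff.mp (hK.uniformContinuousOn_of_continuous hg) (δ / 2)
        (half_pos hδ)
    filter_upwards [nhdsWithin_le_nhds (Iio_mem_nhds hη)] with r hr
    refine (Real.sSup_le ?_ (half_pos hδ).le).trans_lt (half_lt_self hδ)
    rintro _ ⟨⟨p, q⟩, ⟨⟨hp, hq⟩, hpq⟩, rfl⟩
    exact (hclose p hp q hq (hpq.trans_lt hr)).le
  refine ⟨fun r => sSup (S r), ⟨fun r => Real.sSup_nonneg (hS_nonneg r),
    hϖ_mono.monotoneOn _, ?_⟩, fun r p hp q hq hpq => ?_⟩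
  · exact tendsto_order.2 ⟨fun δ hδ => Eventually.of_forall fun r =>
      hδ.trans_le (Real.sSup_nonneg (hS_nonneg r)), hϖ_small⟩
  · exact le_csSup (hS_bdd r) ⟨(p, q), ⟨⟨hp, hq⟩, hpq⟩, rfl⟩

theorem dist_prodMk_prodMk_le_sqrt {W : Type*} [PseudoMetricSpace W] (t s x y : ℝ) (w : W) :
    dist (t, x, w) (s, y, w) ≤ √((t - s) ^ 2 + (x - y) ^ 2) := by
  simp only [Prod.dist_eq, dist_self, Real.dist_eq]
  exact max_le (Real.abs_le_sqrt (by nlinarith [sq_nonneg (x - y)]))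
    (max_le (Real.abs_le_sqrt (by nlinarith [sq_nonneg (t - s)])) (Real.sqrt_nonneg _))

theorem exists_abs_le_add_mul_abs {W : Type*} [TopologicalSpace W] [CompactSpace W]
    {g : ℝ → W → ℝ} {L : ℝ} (hg : Continuous (g 0))
    (hLip : ∀ x y w, |g x w - g y w| ≤ L * |x - y|) :
    ∃ A ≥ 0, ∀ x w, |g x w| ≤ A + L * |x| := by
  obtain ⟨A, hA⟩ := isCompact_univ.exists_bound_of_continuousOn hg.continuousOn
  refine ⟨max A 0, le_max_right _ _, fun x w => ?_⟩
  have h₀ : |g 0 w| ≤ A := hA w (mem_univ w)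
  have h₁ := hLip x 0 w
  rw [sub_zero] at h₁
  linarith [abs_sub_abs_le_abs_sub (g x w) (g 0 w), le_max_left A 0]

theorem sq_le_of_abs_le_add_mul_abs {u B L z : ℝ} (h : |u| ≤ B + L * |z|) :
    u ^ 2 ≤ 2 * B ^ 2 + 2 * L ^ 2 * z ^ 2 := by
  have := pow_le_pow_left₀ (abs_nonneg u) h 2
  rw [sq_abs] at this
  nlinarith [sq_nonneg (B - L * |z|), sq_abs z]

theorem mul_le_of_abs_le_add_mul_abs {u A L z : ℝ} (h : |u| ≤ A + L * |z|) :
    u * z ≤ A * |z| + L * z ^ 2 := by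
  calc u * z ≤ |u| * |z| := (le_abs_self _).trans (abs_mul u z).le
    _ ≤ (A + L * |z|) * |z| := mul_le_mul_of_nonneg_right h (abs_nonneg z)
    _ = A * |z| + L * z ^ 2 := by rw [add_mul, mul_assoc, ← sq, sq_abs]

/-- `[[X, 0], [0, -Y]] ≼ c [[1, -1], [-1, 1]]`, tested against the vector `(u, v)`. -/
theorem mul_sq_sub_mul_sq_le_of_posSemidef {X Y c : ℝ}
    (h : (!![c - X, -c; -c, c + Y]).PosSemidef) (u v : ℝ) :
    X * u ^ 2 - Y * v ^ 2 ≤ c * (u - v) ^ 2 := by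
  have := h.dotProduct_mulVec_nonneg ![u, v]
  simp only [Matrix.mulVec, dotProduct, Fin.sum_univ_two, Matrix.of_apply, Matrix.cons_val',
    Matrix.cons_val_zero, Matrix.cons_val_one, Matrix.empty_val', Matrix.cons_val_fin_one,
    star_trivial] at this
  nlinarith [this]

/-- The estimate for one control `w`: `a₁, b₁` and `a₂, b₂` are `a(·, w), b(·, w)` at `x` and `y`. -/
theorem hjb_integrand_doubling_le {A₀ B₀ L α ε X Y x y a₁ a₂ b₁ b₂ : ℝ} (hA₀ : 0 ≤ A₀)
    (hL : 0 ≤ L) (hα : 0 ≤ α) (hε : 0 ≤ ε)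
    (ha₁ : |a₁| ≤ A₀ + L * |x|) (ha₂ : |a₂| ≤ A₀ + L * |y|)
    (hb₁ : |b₁| ≤ B₀ + L * |x|) (hb₂ : |b₂| ≤ B₀ + L * |y|)
    (hΔa : |a₁ - a₂| ≤ L * |x - y|) (hΔb : |b₁ - b₂| ≤ L * |x - y|)
    (hXY : (!![3 * α - X, -(3 * α); -(3 * α), 3 * α + Y]).PosSemidef) :
    1 / 2 * b₁ ^ 2 * (X + ε) + a₁ * (α * (x - y) + ε * x)
      ≤ 1 / 2 * b₂ ^ 2 * (Y - ε) + a₂ * (α * (x - y) - ε * y)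
        + (1 + 2 * L ^ 2 + 2 * L + 2 * B₀ ^ 2 + 2 * A₀)
          * (α * |x - y| ^ 2 + ε * (1 + |x| ^ 2 + |y| ^ 2)) := by
  simp only [sq_abs]
  set Q := α * (x - y) ^ 2
  set E := ε * (1 + x ^ 2 + y ^ 2)
  have hdiffusion : X * b₁ ^ 2 - Y * b₂ ^ 2 ≤ 3 * L ^ 2 * Q := by
    have hΔb' := pow_le_pow_left₀ (abs_nonneg _) hΔb 2
    rw [sq_abs, mul_pow, sq_abs] at hΔb'
    nlinarith [mul_sq_sub_mul_sq_le_of_posSemidef hXY b₁ b₂]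
  have hdrift : α * ((a₁ - a₂) * (x - y)) ≤ L * Q := by
    have h := mul_le_of_abs_le_add_mul_abs (u := a₁ - a₂) (A := 0) (by rwa [zero_add])
    rw [zero_mul, zero_add] at h
    nlinarith
  have hgrowth : ε * ((b₁ ^ 2 + b₂ ^ 2) / 2 + (a₁ * x + a₂ * y))
      ≤ (2 * B₀ ^ 2 + A₀ + L ^ 2 + L) * E := by
    have hb₁' := sq_le_of_abs_le_add_mul_abs hb₁
    have hb₂' := sq_le_of_abs_le_add_mul_abs hb₂
    have ha₁' := mul_le_of_abs_le_add_mul_abs ha₁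
    have ha₂' := mul_le_of_abs_le_add_mul_abs ha₂
    have hx : A₀ * |x| ≤ A₀ * ((1 + x ^ 2) / 2) :=
      mul_le_mul_of_nonneg_left (by nlinarith [sq_abs x, sq_nonneg (|x| - 1)]) hA₀
    have hy : A₀ * |y| ≤ A₀ * ((1 + y ^ 2) / 2) :=
      mul_le_mul_of_nonneg_left (by nlinarith [sq_abs y, sq_nonneg (|y| - 1)]) hA₀
    have hpoint : (b₁ ^ 2 + b₂ ^ 2) / 2 + (a₁ * x + a₂ * y)
        ≤ (2 * B₀ ^ 2 + A₀ + L ^ 2 + L) * (1 + x ^ 2 + y ^ 2) := by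
      nlinarith [sq_nonneg B₀, sq_nonneg x, sq_nonneg y, mul_nonneg hA₀ (sq_nonneg x),
        mul_nonneg hA₀ (sq_nonneg y), mul_nonneg (sq_nonneg B₀) (sq_nonneg x),
        mul_nonneg (sq_nonneg B₀) (sq_nonneg y)]
    simpa only [E, mul_left_comm ε] using mul_le_mul_of_nonneg_left hpoint hε
  have hQ_slack : 0 ≤ (1 + L ^ 2 / 2 + L + 2 * B₀ ^ 2 + 2 * A₀) * Q := by positivity
  have hE_slack : 0 ≤ (1 + L ^ 2 + L + A₀) * E := by positivity
  nlinarith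

theorem Ham_sub_Ham_le {W : Type*} [TopologicalSpace W] [CompactSpace W] [Nonempty W]
    {a b : ℝ → W → ℝ} {f : ℝ → ℝ → W → ℝ} {t x p A s y q B c : ℝ}
    (ha : Continuous (a y)) (hb : Continuous (b y)) (hf : Continuous (f s y))
    (h : ∀ w, 1 / 2 * b x w ^ 2 * A + a x w * p + f t x w
      ≤ 1 / 2 * b y w ^ 2 * B + a y w * q + f s y w + c) :
    Ham a b f s y q B - Ham a b f t x p A ≤ c := by
  have hbdd : BddAbove (range fun w => 1 / 2 * b y w ^ 2 * B + a y w * q + f s y w) :=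
    (isCompact_range (by fun_prop)).bddAbove
  have : (⨆ w, 1 / 2 * b x w ^ 2 * A + a x w * p + f t x w)
      ≤ (⨆ w, 1 / 2 * b y w ^ 2 * B + a y w * q + f s y w) + c :=
    ciSup_le fun w => (h w).trans (add_le_add_left (le_ciSup hbdd w) c)
  unfold Ham
  linarith

theorem hamiltonian_doubling_estimate_general (T : ℝ)
    {W : Type*} [MetricSpace W] [CompactSpace W] [Nonempty W]
    (a b : ℝ → W → ℝ)
    (ha : Continuous fun p : ℝ × W => a p.1 p.2)
    (hb : Continuous fun p : ℝ × W => b p.1 p.2)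
    (L : ℝ)
    (hLip : ∀ x y w, |a x w - a y w| + |b x w - b y w| ≤ L * |x - y|)
    (f : ℝ → ℝ → W → ℝ)
    (hf : Continuous fun p : ℝ × ℝ × W => f p.1 p.2.1 p.2.2) :
    ∃ C > (0 : ℝ), ∀ D : Set ℝ, IsCompact D →
      ∃ ϖ : ℝ → ℝ, (∀ r, 0 ≤ ϖ r) ∧ MonotoneOn ϖ (Set.Ici 0) ∧
        Tendsto ϖ (𝓝[>] 0) (𝓝 0) ∧
        ∀ t s : ℝ, t ∈ Set.Icc 0 T → s ∈ Set.Icc 0 T →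
          ∀ x y : ℝ, x ∈ D → y ∈ D → ∀ X Y α ε : ℝ, 0 < α → 0 < ε →
            Matrix.PosSemidef (!![3 * α - X, -(3 * α); -(3 * α), 3 * α + Y]) →
            Ham a b f s y (α * (x - y) - ε * y) (Y - ε)
                - Ham a b f t x (α * (x - y) + ε * x) (X + ε)
              ≤ C * (α * |x - y| ^ 2 + ε * (1 + |x| ^ 2 + |y| ^ 2))
                + ϖ (Real.sqrt ((t - s) ^ 2 + (x - y) ^ 2)) := by
  obtain ⟨w₀⟩ := ‹Nonempty W›
  have haL : ∀ x y w, |a x w - a y w| ≤ L * |x - y| := fun x y w =>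
    (le_add_of_nonneg_right (abs_nonneg _)).trans (hLip x y w)
  have hbL : ∀ x y w, |b x w - b y w| ≤ L * |x - y| := fun x y w =>
    (le_add_of_nonneg_left (abs_nonneg _)).trans (hLip x y w)
  have hL : 0 ≤ L := by simpa using (abs_nonneg _).trans (haL 1 0 w₀)
  have hcont : ∀ {g : ℝ → W → ℝ}, (Continuous fun p : ℝ × W => g p.1 p.2) → ∀ x,
      Continuous (g x) := fun hg x => hg.comp (Continuous.prodMk_right x)
  obtain ⟨A₀, hA₀, haA⟩ := exists_abs_le_add_mul_abs (hcont ha 0) haL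
  obtain ⟨B₀, -, hbB⟩ := exists_abs_le_add_mul_abs (hcont hb 0) hbL
  refine ⟨1 + 2 * L ^ 2 + 2 * L + 2 * B₀ ^ 2 + 2 * A₀, by positivity, fun D hD => ?_⟩
  obtain ⟨ϖ, ⟨hϖ_nonneg, hϖ_mono, hϖ_lim⟩, hϖ⟩ :=
    (isCompact_Icc.prod (hD.prod isCompact_univ)).exists_modulusOfContinuity hf.continuousOn
  refine ⟨ϖ, hϖ_nonneg, hϖ_mono, hϖ_lim, fun t s ht hs x y hx hy X Y α ε hα hε hXY =>
    Ham_sub_Ham_le (hcont ha y) (hcont hb y) (hf.comp (f := fun w : W => (s, y, w)) (by fun_prop))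
      fun w => ?_⟩
  have hf_osc := hϖ _ (t, x, w) ⟨ht, hx, mem_univ w⟩ (s, y, w) ⟨hs, hy, mem_univ w⟩
    (dist_prodMk_prodMk_le_sqrt t s x y w)
  linarith [hjb_integrand_doubling_le hA₀ hL hα.le hε.le (haA x w) (haA y w) (hbB x w) (hbB y w)
    (haL x y w) (hbL x y w) hXY, le_of_abs_le hf_osc]

/-- Structural estimate on the Hamiltonian needed for the Crandall–Ishii doubling
argument: there is a constant `C > 0` such that for every compact `D ⊆ ℝ` there is a
modulus of continuity `ϖ` with
`H(s,y,α(x−y)−εy,Y−ε) − H(t,x,α(x−y)+εx,X+ε)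
  ≤ C(α|x−y|² + ε(1+|x|²+|y|²)) + ϖ(|(t,x)−(s,y)|)`
whenever `[[X,0],[0,−Y]] ≼ 3α[[1,−1],[−1,1]]`. -/
theorem hamiltonian_doubling_estimate (T : ℝ) (hT : 0 < T)
    {W : Type*} [MetricSpace W] [CompactSpace W] [Nonempty W]
    (a b : ℝ → W → ℝ)
    (ha : Continuous fun p : ℝ × W => a p.1 p.2)
    (hb : Continuous fun p : ℝ × W => b p.1 p.2)
    (L : ℝ)
    (hLip : ∀ x y w, |a x w - a y w| + |b x w - b y w| ≤ L * |x - y|)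
    (f : ℝ → ℝ → W → ℝ)
    (hf : Continuous fun p : ℝ × ℝ × W => f p.1 p.2.1 p.2.2) :
    ∃ C > (0 : ℝ), ∀ D : Set ℝ, IsCompact D →
      ∃ ϖ : ℝ → ℝ, (∀ r, 0 ≤ ϖ r) ∧ MonotoneOn ϖ (Set.Ici 0) ∧
        Tendsto ϖ (𝓝[>] 0) (𝓝 0) ∧
        ∀ t s : ℝ, t ∈ Set.Icc 0 T → s ∈ Set.Icc 0 T →
          ∀ x y : ℝ, x ∈ D → y ∈ D → ∀ X Y α ε : ℝ, 0 < α → 0 < ε →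
            Matrix.PosSemidef (!![3 * α - X, -(3 * α); -(3 * α), 3 * α + Y]) →
            Ham a b f s y (α * (x - y) - ε * y) (Y - ε)
                - Ham a b f t x (α * (x - y) + ε * x) (X + ε)
              ≤ C * (α * |x - y| ^ 2 + ε * (1 + |x| ^ 2 + |y| ^ 2))
                + ϖ (Real.sqrt ((t - s) ^ 2 + (x - y) ^ 2)) :=
  hamiltonian_doubling_estimate_general T a b ha hb L hLip f hf
end
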